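/- A Pell number P_n is of the form 2m² − 2 for some integer m if and only if P_n ∈ {0, 70}. -/

import Mathlib

/-- The Pell numbers: `P₀ = 0`, `P₁ = 1`, `P_{n+1} = 2·P_n + P_{n−1}`. -/
def pellP : ℕ → ℤ
  | 0 => 0
  | 1 => 1
  | n + 2 => 2 * pellP (n + 1) + pellP n

/-!
With `H n + P n √2 = (1 + √2) ^ n`, parity forces `n = 2s + 2`, and then `P n + 2` is
`2 P (s+2) H s` or `2 H (s+2) P s` according to the parity of `s`. These factors are coprime up to
a factor `3`, whose position is governed by `n mod 4`, so `P n = 2m² - 2` makes some `H k` a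
perfect square. But `H k = e²` means `e⁴ = 2 (P k)² ± 1`, which by Fermat's theorems on
`x⁴ + y⁴ = z²` and (by descent) on `x⁴ - y⁴ = z²` leaves only `k ≤ 1`. Following the
cases, only `s = 2`, i.e. `P 6 = 70`, survives.
-/

/-- The half companion Pell numbers `1, 1, 3, 7, 17, …`, with
`pellH n + pellP n * √2 = (1 + √2) ^ n`. -/
def pellH (n : ℕ) : ℤ := pellP (n + 1) - pellP n

theorem pellP_succ (n : ℕ) : pellP (n + 1) = pellP n + pellH n := by
  rw [pellH]; ring

theorem pellH_succ (n : ℕ) : pellH (n + 1) = pellH n + 2 * pellP n := by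
  simp only [pellH, pellP]; ring

theorem pellP_add_two (n : ℕ) : pellP (n + 2) = 3 * pellP n + 2 * pellH n := by
  rw [pellP_succ, pellP_succ, pellH_succ]; ring

theorem pellH_add_two (n : ℕ) : pellH (n + 2) = 3 * pellH n + 4 * pellP n := by
  rw [pellH_succ, pellH_succ, pellP_succ]; ring

theorem pellP_add_and_pellH_add (a b : ℕ) :
    pellP (a + b) = pellP a * pellH b + pellH a * pellP b ∧
      pellH (a + b) = pellH a * pellH b + 2 * pellP a * pellP b := by
  induction b with
  | zero => simp [pellP, pellH]
  | succ b ih =>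
    rw [← add_assoc, pellP_succ (a + b), pellH_succ (a + b), pellP_succ b, pellH_succ b,
      ih.1, ih.2]
    constructor <;> ring

theorem pellP_two_mul (n : ℕ) : pellP (2 * n) = 2 * pellP n * pellH n := by
  rw [two_mul, (pellP_add_and_pellH_add n n).1]; ring

theorem pellH_two_mul (n : ℕ) : pellH (2 * n) = pellH n ^ 2 + 2 * pellP n ^ 2 := by
  rw [two_mul, (pellP_add_and_pellH_add n n).2]; ring

theorem pellH_sq_sub_two_mul_pellP_sq (n : ℕ) : pellH n ^ 2 - 2 * pellP n ^ 2 = (-1) ^ n := by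
  induction n with
  | zero => simp [pellP, pellH]
  | succ n ih => rw [pellP_succ, pellH_succ, pow_succ]; linear_combination (-1 : ℤ) * ih

theorem pellP_nonneg : ∀ n, 0 ≤ pellP n
  | 0 => le_rfl
  | 1 => zero_le_one
  | n + 2 => by rw [pellP]; linarith [pellP_nonneg n, pellP_nonneg (n + 1)]

theorem pellH_pos (n : ℕ) : 0 < pellH n := by
  induction n with
  | zero => simp [pellP, pellH]
  | succ n ih => rw [pellH_succ]; linarith [pellP_nonneg n]

theorem pellP_pos {n : ℕ} (hn : n ≠ 0) : 0 < pellP n := by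
  obtain ⟨k, rfl⟩ := Nat.exists_eq_succ_of_ne_zero hn
  rw [pellP_succ]; linarith [pellP_nonneg k, pellH_pos k]

theorem one_lt_pellH {n : ℕ} (hn : 2 ≤ n) : 1 < pellH n := by
  obtain ⟨k, rfl⟩ := Nat.exists_eq_add_of_le' hn
  rw [pellH_succ]; linarith [pellH_pos (k + 1), pellP_pos (Nat.succ_ne_zero k)]

theorem odd_pellH (n : ℕ) : Odd (pellH n) := by
  induction n with
  | zero => simp [pellP, pellH]
  | succ n ih => rw [pellH_succ]; exact ih.add_even (even_two_mul _)

theorem even_pellP_iff (n : ℕ) : Even (pellP n) ↔ Even n := by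
  induction n with
  | zero => simp [pellP]
  | succ n ih =>
    simp [pellP_succ, Int.even_add, ih, Nat.even_add_one,
      Int.not_even_iff_odd.mpr (odd_pellH n)]

theorem isCoprime_of_add_eq_neg_one_pow {a b u v : ℤ} {n : ℕ} (h : u * a + v * b = (-1) ^ n) :
    IsCoprime a b := by
  have hsq : ((-1 : ℤ) ^ n) ^ 2 = 1 := by
    rw [← pow_mul]; exact (even_two.mul_left n).neg_one_pow
  exact ⟨(-1) ^ n * u, (-1) ^ n * v, by linear_combination (-1 : ℤ) ^ n * h + hsq⟩

theorem isCoprime_pellP_pellH (n : ℕ) : IsCoprime (pellP n) (pellH n) :=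
  isCoprime_of_add_eq_neg_one_pow (u := -2 * pellP n) (v := pellH n)
    (by linear_combination pellH_sq_sub_two_mul_pellP_sq n)

theorem three_dvd_pellP_iff : ∀ n, (3 : ℤ) ∣ pellP n ↔ n % 4 = 0
  | 0 | 1 | 2 | 3 => by decide
  | n + 4 => by
    have h := (pellP_add_and_pellH_add n 4).1
    rw [show pellH 4 = 17 by decide, show pellP 4 = 12 by decide] at h
    have := three_dvd_pellP_iff n
    omega

theorem three_dvd_pellH_iff : ∀ n, (3 : ℤ) ∣ pellH n ↔ n % 4 = 2
  | 0 | 1 | 2 | 3 => by decide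
  | n + 4 => by
    have h := (pellP_add_and_pellH_add n 4).2
    rw [show pellH 4 = 17 by decide, show pellP 4 = 12 by decide] at h
    have := three_dvd_pellH_iff n
    omega

theorem pellP_two_mul_add_two_add (s : ℕ) :
    pellP (2 * s + 2) + 2 * (-1) ^ s = 2 * (pellP (s + 2) * pellH s) := by
  rw [show 2 * s + 2 = s + 2 + s by ring, (pellP_add_and_pellH_add _ _).1, pellP_add_two,
    pellH_add_two]
  linear_combination (-2 : ℤ) * pellH_sq_sub_two_mul_pellP_sq s

theorem pellP_two_mul_add_two_sub (s : ℕ) :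
    pellP (2 * s + 2) - 2 * (-1) ^ s = 2 * (pellH (s + 2) * pellP s) := by
  rw [show 2 * s + 2 = s + 2 + s by ring, (pellP_add_and_pellH_add _ _).1, pellP_add_two,
    pellH_add_two]
  linear_combination (2 : ℤ) * pellH_sq_sub_two_mul_pellP_sq s

namespace Int

theorem sq_of_isCoprime_of_nonneg {a b c : ℤ} (h : IsCoprime a b) (heq : a * b = c ^ 2)
    (ha : 0 ≤ a) : ∃ d, a = d ^ 2 := by
  obtain ⟨d, hd | hd⟩ := Int.sq_of_isCoprime h heq
  · exact ⟨d, hd⟩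
  · exact ⟨0, by nlinarith [sq_nonneg d]⟩

theorem sq_of_isCoprime_of_mul_eq_three_mul_sq {a b c : ℤ} (h : IsCoprime a b)
    (h3 : ¬ 3 ∣ a) (heq : a * b = 3 * c ^ 2) (ha : 0 ≤ a) : ∃ d, a = d ^ 2 := by
  obtain ⟨b', rfl⟩ : 3 ∣ b :=
    (Int.prime_three.dvd_or_dvd ⟨c ^ 2, heq⟩).resolve_left h3
  exact sq_of_isCoprime_of_nonneg h.of_mul_right_right (by linarith) ha

theorem exists_sq_and_two_mul_sq_of_mul_eq_two_mul_sq {p q r : ℤ} (hpq : IsCoprime p q)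
    (hp : 0 < p) (hq : q ≠ 0) (hqe : Even q) (h : p * q = 2 * r ^ 2) :
    ∃ a b, IsCoprime a b ∧ Odd a ∧ b ≠ 0 ∧ p = a ^ 2 ∧ q = 2 * b ^ 2 := by
  obtain ⟨q', rfl⟩ := hqe.two_dvd
  have hpq' : p * q' = r ^ 2 := by linarith
  have hq' : 0 ≤ q' := by nlinarith [sq_nonneg r]
  obtain ⟨a, rfl⟩ := sq_of_isCoprime_of_nonneg hpq.of_mul_right_right hpq' hp.le
  obtain ⟨b, rfl⟩ := sq_of_isCoprime_of_nonneg hpq.of_mul_right_right.symm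
    (by rw [mul_comm, hpq']) hq'
  have ha : IsCoprime 2 a := (IsCoprime.pow_right_iff two_pos).mp hpq.of_mul_right_left.symm
  refine ⟨a, b, (IsCoprime.pow_iff two_pos two_pos).mp hpq.of_mul_right_right,
    Int.not_even_iff_odd.mp fun he => (Int.prime_two.coprime_iff_not_dvd.mp ha) he.two_dvd,
    by rintro rfl; simp at hq, rfl, rfl⟩

theorem isCoprime_sq_of_fourth_pow_sub_fourth_pow_eq_sq {x y z : ℤ} (hxy : IsCoprime x y)
    (h : x ^ 4 - y ^ 4 = z ^ 2) : IsCoprime z (y ^ 2) := by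
  have := (hxy.pow (m := 4) (n := 4)).add_mul_left_left (-1)
  rw [show x ^ 4 + y ^ 4 * -1 = z ^ 2 by linear_combination h, show y ^ 4 = (y ^ 2) ^ 2 by ring]
    at this
  exact (IsCoprime.pow_iff two_pos two_pos).mp this

theorem exists_fourth_pow_sub_fourth_pow_of_odd {x y z : ℤ} (hxy : IsCoprime x y)
    (hy : Odd y) (hz : z ≠ 0) (h : x ^ 4 - y ^ 4 = z ^ 2) :
    ∃ m k w : ℤ, IsCoprime m k ∧ k ≠ 0 ∧ w ≠ 0 ∧ m ^ 4 - k ^ 4 = w ^ 2 ∧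
      m.natAbs < x.natAbs := by
  have hy0 : y ≠ 0 := by rintro rfl; exact Int.not_odd_zero hy
  have hx : x ≠ 0 := by
    rintro rfl
    nlinarith [Even.pow_pos (n := 4) (by decide) hy0, sq_nonneg z]
  obtain ⟨m, k, hy2, hz2, hx2, hmk, -, -⟩ := PythagoreanTriple.coprime_classification'
    (x := y ^ 2) (y := z) (z := x ^ 2) (by unfold PythagoreanTriple; linear_combination -h)
    (isCoprime_iff_gcd_eq_one.mp (isCoprime_sq_of_fourth_pow_sub_fourth_pow_eq_sq hxy h).symm)
    (Int.odd_iff.mp (hy.pow)) (by positivity)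
  have hk : k ≠ 0 := by rintro rfl; simp_all
  refine ⟨m, k, x * y, Int.isCoprime_iff_gcd_eq_one.mpr hmk, hk, mul_ne_zero hx hy0,
    by rw [mul_pow, hx2, hy2]; ring, ?_⟩
  rw [Int.natAbs_lt_iff_sq_lt, hx2]
  exact lt_add_of_pos_right _ (by positivity)

theorem exists_fourth_pow_add_four_mul_fourth_pow_of_even {x y z : ℤ} (hxy : IsCoprime x y)
    (hy : Even y) (hy0 : y ≠ 0) (h : x ^ 4 - y ^ 4 = z ^ 2) :
    ∃ a b : ℤ, IsCoprime a b ∧ Odd a ∧ b ≠ 0 ∧ a ^ 4 + 4 * b ^ 4 = x ^ 2 := by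
  have hx : Odd x := Int.not_even_iff_odd.mp fun hx => Int.not_even_one <| by
    obtain ⟨u, v, huv⟩ := hxy
    exact huv ▸ (hx.mul_left u).add (hy.mul_left v)
  have hz : Odd z := by
    have : Odd (z ^ 2) := h ▸ (hx.pow).sub_even (hy.pow_of_ne_zero four_ne_zero)
    exact (Int.odd_pow.mp this).resolve_right two_ne_zero
  obtain ⟨m, k, -, hy2, hx2, hmk, hpar, hm⟩ := PythagoreanTriple.coprime_classification'
    (x := z) (y := y ^ 2) (z := x ^ 2) (by unfold PythagoreanTriple; linear_combination -h)
    (Int.isCoprime_iff_gcd_eq_one.mp (isCoprime_sq_of_fourth_pow_sub_fourth_pow_eq_sq hxy h))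
    (Int.odd_iff.mp hz) (Even.pow_pos even_two fun hx0 => Int.not_odd_zero (hx0 ▸ hx))
  replace hmk := Int.isCoprime_iff_gcd_eq_one.mpr hmk
  obtain ⟨y₁, rfl⟩ := hy.two_dvd
  have hmk2 : m * k = 2 * y₁ ^ 2 := by linarith
  have hy₁ : y₁ ≠ 0 := by rintro rfl; simp at hy0
  have hpos : 0 < m * k := by rw [hmk2]; positivity
  have hm0 : 0 < m := lt_of_le_of_ne hm (by rintro rfl; simp at hpos)
  have hk0 : 0 < k := pos_of_mul_pos_right hpos hm0.le
  rcases hpar with ⟨hme, -⟩ | ⟨-, hke⟩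
  · obtain ⟨a, b, hab, ha, hb, rfl, rfl⟩ :=
      exists_sq_and_two_mul_sq_of_mul_eq_two_mul_sq hmk.symm hk0 hm0.ne'
        (Int.even_iff.mpr hme) (r := y₁) (by linarith)
    exact ⟨a, b, hab, ha, hb, by rw [hx2]; ring⟩
  · obtain ⟨a, b, hab, ha, hb, rfl, rfl⟩ :=
      exists_sq_and_two_mul_sq_of_mul_eq_two_mul_sq hmk hm0 hk0.ne'
        (Int.even_iff.mpr hke) hmk2
    exact ⟨a, b, hab, ha, hb, by rw [hx2]; ring⟩

theorem exists_fourth_pow_sub_fourth_pow_of_add_four_mul {a b c : ℤ} (hab : IsCoprime a b)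
    (ha : Odd a) (hb : b ≠ 0) (h : a ^ 4 + 4 * b ^ 4 = c ^ 2) :
    ∃ s t w : ℤ, IsCoprime s t ∧ t ≠ 0 ∧ w ≠ 0 ∧ s ^ 4 - t ^ 4 = w ^ 2 ∧
      s.natAbs < c.natAbs := by
  have ha0 : a ≠ 0 := by rintro rfl; exact Int.not_odd_zero ha
  have hc0 : c ≠ 0 := by
    rintro rfl
    nlinarith [Even.pow_pos (n := 4) (by decide) ha0, Even.pow_pos (n := 4) (by decide) hb]
  have ha2 : IsCoprime (a ^ 2) 2 := (prime_two.coprime_iff_not_dvd.mpr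
    fun h2 => not_even_iff_odd.mpr ha (even_iff_two_dvd.mpr h2)).symm.pow_left
  obtain ⟨M, K, hMK2, hb2, hc, hMK, -, hM⟩ := PythagoreanTriple.coprime_classification'
    (x := a ^ 2) (y := 2 * b ^ 2) (z := |c|)
    (by unfold PythagoreanTriple; rw [abs_mul_abs_self]; linear_combination h)
    (Int.isCoprime_iff_gcd_eq_one.mp (ha2.mul_right (hab.pow (m := 2) (n := 2))))
    (Int.odd_iff.mp ha.pow) (abs_pos.mpr hc0)
  replace hMK := Int.isCoprime_iff_gcd_eq_one.mpr hMK
  have hMK' : M * K = b ^ 2 := by linarith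
  have hpos : 0 < M * K := by rw [hMK']; positivity
  have hM0 : 0 < M := lt_of_le_of_ne hM (by rintro rfl; simp at hpos)
  have hK0 : 0 < K := pos_of_mul_pos_right hpos hM0.le
  obtain ⟨s, rfl⟩ := sq_of_isCoprime_of_nonneg hMK hMK' hM
  obtain ⟨t, rfl⟩ := sq_of_isCoprime_of_nonneg hMK.symm (by rw [mul_comm, hMK']) hK0.le
  refine ⟨s, t, a, (IsCoprime.pow_iff two_pos two_pos).mp hMK, by rintro rfl; simp at hK0, ha0,
    by rw [hMK2]; ring, ?_⟩
  rw [Int.natAbs_lt_iff_sq_lt, ← sq_abs c, hc]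
  nlinarith

theorem exists_smaller_of_fourth_pow_sub_fourth_pow_eq_sq {x y z : ℤ} (hxy : IsCoprime x y)
    (hy : y ≠ 0) (hz : z ≠ 0) (h : x ^ 4 - y ^ 4 = z ^ 2) :
    ∃ x' y' z' : ℤ, IsCoprime x' y' ∧ y' ≠ 0 ∧ z' ≠ 0 ∧ x' ^ 4 - y' ^ 4 = z' ^ 2 ∧
      x'.natAbs < x.natAbs := by
  rcases Int.even_or_odd y with hye | hyo
  · obtain ⟨a, b, hab, ha, hb, habx⟩ :=
      exists_fourth_pow_add_four_mul_fourth_pow_of_even hxy hye hy h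
    exact exists_fourth_pow_sub_fourth_pow_of_add_four_mul hab ha hb habx
  · exact exists_fourth_pow_sub_fourth_pow_of_odd hxy hyo hz h

theorem eq_zero_of_fourth_pow_sub_fourth_pow_eq_sq {x y z : ℤ} (hxy : IsCoprime x y)
    (hy : y ≠ 0) (h : x ^ 4 - y ^ 4 = z ^ 2) : z = 0 := by
  induction hn : x.natAbs using Nat.strong_induction_on generalizing x y z with
  | _ n ih =>
    by_contra hz
    obtain ⟨x', y', z', hxy', hy', hz', h', hlt⟩ :=
      exists_smaller_of_fourth_pow_sub_fourth_pow_eq_sq hxy hy hz h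
    exact hz' (ih _ (hn ▸ hlt) hxy' hy' h' rfl)

theorem eq_zero_of_fourth_pow_eq_two_mul_sq_add_one {x y : ℤ} (h : x ^ 4 = 2 * y ^ 2 + 1) :
    y = 0 := by
  by_contra hy
  have hx : x ≠ 0 := by rintro rfl; nlinarith [sq_nonneg y]
  exact not_fermat_42 hy hx (c := y ^ 2 + 1) (by rw [h]; ring)

theorem sq_eq_one_of_fourth_pow_add_one_eq_two_mul_sq {x y : ℤ} (h : x ^ 4 + 1 = 2 * y ^ 2) :
    x ^ 2 = 1 := by
  have hx : x ≠ 0 := by rintro rfl; omega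
  have hz := eq_zero_of_fourth_pow_sub_fourth_pow_eq_sq (z := y ^ 2 - 1)
    ⟨2 * y, -x ^ 3, by linear_combination -h⟩ hx (by linear_combination -h)
  nlinarith [sq_nonneg x]

end Int

theorem le_one_of_pellH_eq_sq {k : ℕ} {e : ℤ} (h : pellH k = e ^ 2) : k ≤ 1 := by
  have hnorm := pellH_sq_sub_two_mul_pellP_sq k
  rw [h] at hnorm
  rcases Nat.even_or_odd k with hk | hk
  · rw [hk.neg_one_pow] at hnorm
    have hP := Int.eq_zero_of_fourth_pow_eq_two_mul_sq_add_one (x := e) (y := pellP k)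
      (by linear_combination hnorm)
    by_contra hk1
    exact (pellP_pos (by omega)).ne' hP
  · rw [hk.neg_one_pow] at hnorm
    have he := Int.sq_eq_one_of_fourth_pow_add_one_eq_two_mul_sq (x := e) (y := pellP k)
      (by linear_combination hnorm)
    by_contra hk1
    exact (one_lt_pellH (by omega)).ne' (h.trans he)

theorem eq_one_of_pellP_four_mul_eq_three_mul_sq {w : ℕ} {a : ℤ} (hw : w ≠ 0)
    (h : pellP (4 * w) = 3 * a ^ 2) : w = 1 := by
  have h4w : pellP (4 * w) = 4 * (pellP w * pellH w * pellH (2 * w)) := by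
    rw [show 4 * w = 2 * (2 * w) by ring, pellP_two_mul, pellP_two_mul]; ring
  obtain ⟨c, rfl⟩ : (2 : ℤ) ∣ a := Int.prime_two.dvd_of_dvd_pow (n := 2)
    ⟨2 * (pellP w * pellH w * pellH (2 * w)) - a ^ 2, by linarith⟩
  have hc : pellP w * pellH w * pellH (2 * w) = 3 * c ^ 2 := by linarith
  have hnorm := pellH_sq_sub_two_mul_pellP_sq w
  have hP2 : IsCoprime (pellP w) (pellH (2 * w)) :=
    isCoprime_of_add_eq_neg_one_pow (u := -4 * pellP w) (v := 1)
      (by rw [pellH_two_mul]; linear_combination hnorm)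
  have hH2 : IsCoprime (pellH w) (pellH (2 * w)) :=
    isCoprime_of_add_eq_neg_one_pow (u := 2 * pellH w) (v := -1)
      (by rw [pellH_two_mul]; linear_combination hnorm)
  by_cases h3 : (3 : ℤ) ∣ pellH w
  · have h3' : ¬ (3 : ℤ) ∣ pellH (2 * w) := by
      rw [three_dvd_pellH_iff] at h3 ⊢; omega
    obtain ⟨d, hd⟩ := Int.sq_of_isCoprime_of_mul_eq_three_mul_sq
      (hP2.symm.mul_right hH2.symm) h3' (by rw [← hc]; ring) (pellH_pos _).le
    have := le_one_of_pellH_eq_sq hd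
    omega
  · obtain ⟨d, hd⟩ := Int.sq_of_isCoprime_of_mul_eq_three_mul_sq
      ((isCoprime_pellP_pellH w).symm.mul_right hH2) h3 (by rw [← hc]; ring) (pellH_pos _).le
    have := le_one_of_pellH_eq_sq hd
    omega

theorem eq_two_of_pellP_add_two_mul_pellH_eq_sq {s : ℕ} {m : ℤ} (hs : Even s)
    (h : pellP (s + 2) * pellH s = m ^ 2) : s = 2 := by
  by_cases h3 : (3 : ℤ) ∣ pellH s
  · obtain ⟨w, hw⟩ : ∃ w, s + 2 = 4 * w :=
      ⟨(s + 2) / 4, by have := (three_dvd_pellH_iff s).mp h3; omega⟩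
    -- `P (s + 2) = 3 u` and `H s = 3 v` with `u = P s + 2 v` coprime to `v`, so `u` is a square.
    obtain ⟨v, hv⟩ := h3
    have hu : pellP (s + 2) = 3 * (pellP s + 2 * v) := by rw [pellP_add_two, hv]; ring
    obtain ⟨m₁, rfl⟩ : (3 : ℤ) ∣ m := Int.prime_three.dvd_of_dvd_pow (n := 2)
      ⟨3 * ((pellP s + 2 * v) * v), by rw [← h, hu, hv]; ring⟩
    have huv : (pellP s + 2 * v) * v = m₁ ^ 2 := by rw [hu, hv] at h; linarith
    have hcop : IsCoprime (pellP s + 2 * v) v :=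
      ((hv ▸ isCoprime_pellP_pellH s).of_mul_right_right).add_mul_right_left 2
    obtain ⟨a, ha⟩ :=
      Int.sq_of_isCoprime_of_nonneg hcop huv (by linarith [pellP_nonneg (s + 2)])
    have := eq_one_of_pellP_four_mul_eq_three_mul_sq (a := a) (w := w) (by omega)
      (by rw [← hw, hu, ha])
    omega
  · have hcop : IsCoprime (pellH s) (pellP (s + 2)) := by
      rw [pellP_add_two]
      exact ((Int.prime_three.coprime_iff_not_dvd.mpr h3).mul_left
        (isCoprime_pellP_pellH s)).symm.add_mul_right_right 2
    obtain ⟨e, he⟩ := Int.sq_of_isCoprime_of_nonneg hcop (by rw [mul_comm, h]) (pellH_pos s).le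
    obtain rfl : s = 0 := by have := le_one_of_pellH_eq_sq he; obtain ⟨r, rfl⟩ := hs; omega
    have hm : m ^ 2 = 2 := by rw [← h]; decide
    exact (Int.sq_ne_two_mod_four m (by rw [← sq, hm]; decide)).elim

theorem pellH_add_two_mul_pellP_ne_sq {s : ℕ} (hs : Odd s) (m : ℤ) :
    pellH (s + 2) * pellP s ≠ m ^ 2 := by
  intro h
  have h3 : ¬ (3 : ℤ) ∣ pellP s := by
    rw [three_dvd_pellP_iff]; obtain ⟨r, rfl⟩ := hs; omega
  have hcop : IsCoprime (pellH (s + 2)) (pellP s) := by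
    rw [pellH_add_two]
    exact ((Int.prime_three.coprime_iff_not_dvd.mpr h3).mul_left
      (isCoprime_pellP_pellH s).symm).add_mul_right_left 4
  obtain ⟨e, he⟩ := Int.sq_of_isCoprime_of_nonneg hcop h (pellH_pos _).le
  have := le_one_of_pellH_eq_sq he
  omega

theorem eq_zero_or_six_of_pellP_eq_two_mul_sq_sub_two {n : ℕ} {m : ℤ}
    (h : pellP n = 2 * m ^ 2 - 2) : n = 0 ∨ n = 6 := by
  have hn : Even n := (even_pellP_iff n).mp ⟨m ^ 2 - 1, by rw [h]; ring⟩
  obtain ⟨t, rfl⟩ := hn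
  obtain _ | s := t
  · exact Or.inl rfl
  rw [show s + 1 + (s + 1) = 2 * s + 2 by omega] at h ⊢
  rcases Nat.even_or_odd s with hs | hs
  · have hsq : pellP (s + 2) * pellH s = m ^ 2 := by
      linarith [pellP_two_mul_add_two_add s, hs.neg_one_pow (α := ℤ)]
    exact Or.inr (by rw [eq_two_of_pellP_add_two_mul_pellH_eq_sq hs hsq])
  · have hsq : pellH (s + 2) * pellP s = m ^ 2 := by
      linarith [pellP_two_mul_add_two_sub s, hs.neg_one_pow (α := ℤ)]
    exact absurd hsq (pellH_add_two_mul_pellP_ne_sq hs m)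

/-- **Theorem.** A Pell number is of the form `2m² − 2` iff it is `0` or `70`. -/
theorem stmt18 (n : ℕ) :
    (∃ m : ℤ, pellP n = 2 * m ^ 2 - 2) ↔ pellP n ∈ ({0, 70} : Set ℤ) := by
  constructor
  · rintro ⟨m, hm⟩
    rcases eq_zero_or_six_of_pellP_eq_two_mul_sq_sub_two hm with rfl | rfl <;> decide
  · rintro (h | h)
    · exact ⟨1, by rw [h]; norm_num⟩
    · exact ⟨6, by rw [h]; norm_num⟩
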